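/- Let G be a graph, H an induced subgraph of G that is a 2-degenerate 1-island with t = |V(H)| ≤ 12, and suppose there is a recolouring sequence with 5 colours from α restricted to G−H to β restricted to G−H recolouring each vertex at most 6143 times. Then this sequence lifts to a recolouring sequence from α to β in G recolouring each vertex of H at most 6143 times, where c₁ = 2049 and c_i = ⌈(6143+c_{i−1})/2⌉+1 bounds the number of recolourings of the i-th vertex in the degeneracy ordering. -/

import Mathlib

/-- A proper `k`-colouring of a simple graph. -/
def Proper {V : Type*} (G : SimpleGraph V) {k : ℕ} (c : V → Fin k) : Prop :=
  ∀ ⦃u w⦄, G.Adj u w → c u ≠ c w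

/-- A recolouring sequence in `G`: a list of proper `k`-colourings in which
consecutive colourings differ on exactly one vertex. -/
def RecolSeq {V : Type*} (G : SimpleGraph V) {k : ℕ} (L : List (V → Fin k)) : Prop :=
  (∀ c ∈ L, Proper G c) ∧ List.Chain' (fun c c' : V → Fin k => ∃! x, c x ≠ c' x) L

/-- The number of times the vertex `x` is recoloured along the sequence `L`. -/
def recolCount {V : Type*} {α : Type*} [DecidableEq α] (L : List (V → α)) (x : V) : ℕ :=
  (L.zip L.tail).countP fun p => decide (p.1 x ≠ p.2 x)

/-- `H` (with enumeration `v : Fin t → V` of its vertices) is a 2-degenerate 1-island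
of `G`: each vertex of `H` has at most one neighbour outside `H`, and each `v i` has
at most two neighbours in `(G - H) ∪ {v 0, …, v (i-1)}`. -/
def IsIsland {V : Type*} (G : SimpleGraph V) (H : Finset V) (t : ℕ) (v : Fin t → V) :
    Prop :=
  Function.Injective v ∧ (∀ i, v i ∈ H) ∧ (∀ x ∈ H, ∃ i, v i = x) ∧
  (∀ x ∈ H, (G.neighborSet x \ (H : Set V)).ncard ≤ 1) ∧
  (∀ i : Fin t,
    (G.neighborSet (v i) ∩ ((H : Set V)ᶜ ∪ {x | ∃ j : Fin t, j < i ∧ v j = x})).ncard ≤ 2)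

/-- The recolouring bounds `c₁ = 2049`, `c_{i+1} = ⌈(6143 + c_i)/2⌉ + 1` (0-indexed). -/
def cseq : ℕ → ℕ
  | 0 => 2049
  | i + 1 => (6143 + cseq i + 1) / 2 + 1




set_option linter.unusedSectionVars false

section Machinery

variable {W : Type*} [DecidableEq W]

/-- apply a move -/
def mstep (c : W → Fin 5) (m : W × Fin 5) : W → Fin 5 := Function.update c m.1 m.2

/-- list of states starting at `c` -/
def play (c : W → Fin 5) (ms : List (W × Fin 5)) : List (W → Fin 5) :=
  List.scanl mstep c ms

@[simp] lemma play_nil (c : W → Fin 5) : play c [] = [c] := rfl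

@[simp] lemma play_cons (c : W → Fin 5) (m : W × Fin 5) (ms : List (W × Fin 5)) :
    play c (m :: ms) = c :: play (mstep c m) ms := List.scanl_cons

@[simp] lemma play_ne_nil (c : W → Fin 5) (ms : List (W × Fin 5)) : play c ms ≠ [] := by
  cases ms <;> simp [play]

@[simp] lemma play_head? (c : W → Fin 5) (ms : List (W × Fin 5)) :
    (play c ms).head? = some c := by cases ms <;> simp [play_cons]

lemma play_getLast? (c : W → Fin 5) (ms : List (W × Fin 5)) :
    (play c ms).getLast? = some (List.foldl mstep c ms) := by
  induction ms generalizing c with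
  | nil => rfl
  | cons m ms ih =>
      rw [play_cons, List.foldl_cons, ← ih (mstep c m)]
      cases hms : play (mstep c m) ms with
      | nil => exact absurd hms (play_ne_nil _ _)
      | cons a l => simp

@[simp] lemma mstep_self (c : W → Fin 5) (m : W × Fin 5) : mstep c m m.1 = m.2 :=
  Function.update_self _ _ _

lemma mstep_other (c : W → Fin 5) (m : W × Fin 5) {x : W} (h : x ≠ m.1) :
    mstep c m x = c x := Function.update_of_ne h _ _

/-- all moves are effective -/
def EffMoves : (W → Fin 5) → List (W × Fin 5) → Prop
  | _, [] => True
  | c, m :: ms => m.2 ≠ c m.1 ∧ EffMoves (mstep c m) ms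

lemma recolCount_play (c : W → Fin 5) (ms : List (W × Fin 5)) (h : EffMoves c ms) (x : W) :
    recolCount (play c ms) x = ms.countP (fun m => m.1 = x) := by
  induction ms generalizing c with
  | nil => simp [recolCount]
  | cons m ms ih =>
      obtain ⟨h1, h2⟩ := h
      have hz : (play c (m :: ms)).zip (play c (m :: ms)).tail
          = (c, mstep c m) :: ((play (mstep c m) ms).zip (play (mstep c m) ms).tail) := by
        rw [play_cons]
        cases hms : ms with
        | nil => rfl
        | cons a l => rw [play_cons]; rfl
      rw [recolCount, hz, List.countP_cons, ← recolCount, ih _ h2, List.countP_cons]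
      congr 1
      by_cases hx : m.1 = x
      · subst hx
        simp [h1.symm]
      · simp only [mstep_other c m (Ne.symm hx)]
        simp [hx]


variable (G : SimpleGraph W)

/-- a sequence of moves valid for the subgraph induced on `S` -/
def OkMoves (S : Set W) : (W → Fin 5) → List (W × Fin 5) → Prop
  | _, [] => True
  | c, m :: ms => m.1 ∈ S ∧ m.2 ≠ c m.1 ∧ (∀ u ∈ S, G.Adj m.1 u → m.2 ≠ c u) ∧
      OkMoves S (mstep c m) ms

variable {G}

lemma OkMoves.eff {S : Set W} {c : W → Fin 5} {ms : List (W × Fin 5)}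
    (h : OkMoves G S c ms) : EffMoves c ms := by
  induction ms generalizing c with
  | nil => trivial
  | cons m ms ih => exact ⟨h.2.1, ih h.2.2.2⟩

lemma OkMoves.mem {S : Set W} {c : W → Fin 5} {ms : List (W × Fin 5)}
    (h : OkMoves G S c ms) : ∀ m ∈ ms, m.1 ∈ S := by
  induction ms generalizing c with
  | nil => simp
  | cons m ms ih =>
      intro m' hm'
      rcases List.mem_cons.mp hm' with rfl | hm'
      · exact h.1
      · exact ih h.2.2.2 _ hm'

lemma foldl_eq_off {c : W → Fin 5} {ms : List (W × Fin 5)} {S : Set W}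
    (hmem : ∀ m ∈ ms, m.1 ∈ S) {x : W} (hx : x ∉ S) :
    List.foldl mstep c ms x = c x := by
  induction ms generalizing c with
  | nil => rfl
  | cons m ms ih =>
      rw [List.foldl_cons, ih (fun m hm => hmem m (List.mem_cons_of_mem _ hm)),
        mstep_other]
      intro hxm
      exact hx (hxm ▸ hmem m List.mem_cons_self)

lemma states_eq_off {c : W → Fin 5} {ms : List (W × Fin 5)} {S : Set W}
    (hmem : ∀ m ∈ ms, m.1 ∈ S) {x : W} (hx : x ∉ S) :
    ∀ d ∈ play c ms, d x = c x := by
  induction ms generalizing c with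
  | nil => intro d hd; rw [List.mem_singleton.mp hd]
  | cons m ms ih =>
      intro d hd
      rw [play_cons, List.mem_cons] at hd
      rcases hd with rfl | hd
      · rfl
      · rw [ih (fun m hm => hmem m (List.mem_cons_of_mem _ hm)) d hd,
          mstep_other]
        intro hxm
        exact hx (hxm ▸ hmem m List.mem_cons_self)

/-- properness restricted to a set -/
def ProperOn (G : SimpleGraph W) (S : Set W) (c : W → Fin 5) : Prop :=
  ∀ u ∈ S, ∀ x ∈ S, G.Adj u x → c u ≠ c x

lemma OkMoves.proper {S : Set W} {c : W → Fin 5} {ms : List (W × Fin 5)}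
    (h : OkMoves G S c ms) (hc : ProperOn G S c) :
    ∀ d ∈ play c ms, ProperOn G S d := by
  induction ms generalizing c with
  | nil => intro d hd; rwa [List.mem_singleton.mp hd]
  | cons m ms ih =>
      intro d hd
      rw [play_cons, List.mem_cons] at hd
      rcases hd with rfl | hd
      · exact hc
      · refine ih h.2.2.2 ?_ d hd
        intro u hu x hx hadj
        have hux : u ≠ x := G.ne_of_adj hadj
        by_cases hum : u = m.1
        · rw [hum, mstep_self, mstep_other c m (show x ≠ m.1 from hum ▸ hux.symm)]
          exact h.2.2.1 x hx (hum ▸ hadj)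
        · rw [mstep_other c m hum]
          by_cases hxm : x = m.1
          · rw [hxm, mstep_self]
            exact fun hh => (h.2.2.1 u hu (hxm ▸ G.adj_symm hadj)) hh.symm
          · rw [mstep_other c m hxm]
            exact hc u hu x hx hadj

lemma OkMoves.chain' {S : Set W} {c : W → Fin 5} {ms : List (W × Fin 5)}
    (h : OkMoves G S c ms) :
    List.Chain' (fun c c' : W → Fin 5 => ∃! x, c x ≠ c' x) (play c ms) := by
  induction ms generalizing c with
  | nil => exact List.isChain_singleton _
  | cons m ms ih =>
      rw [play_cons]
      rcases hms : play (mstep c m) ms with _ | ⟨a, l⟩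
      · exact absurd hms (play_ne_nil _ _)
      · have ha : a = mstep c m := by
          have := play_head? (mstep c m) ms
          rw [hms] at this
          exact Option.some_inj.mp this
        refine List.isChain_cons_cons.mpr ?_
        constructor
        · subst ha
          refine ⟨m.1, ?_, ?_⟩
          · show c m.1 ≠ mstep c m m.1
            rw [mstep_self]; exact fun hh => h.2.1 hh.symm
          · intro y hy
            by_contra hym
            exact hy (by rw [mstep_other c m hym])
        · rw [← hms]
          exact ih h.2.2.2

lemma OkMoves.congr {S : Set W} {c c' : W → Fin 5} {ms : List (W × Fin 5)}
    (h : OkMoves G S c ms) (hcc : ∀ x ∈ S, c x = c' x) : OkMoves G S c' ms := by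
  induction ms generalizing c c' with
  | nil => trivial
  | cons m ms ih =>
      obtain ⟨h1, h2, h3, h4⟩ := h
      refine ⟨h1, by rw [← hcc _ h1]; exact h2, fun u hu hadj => by rw [← hcc _ hu]; exact h3 u hu hadj, ?_⟩
      refine ih h4 (fun x hx => ?_)
      by_cases hxm : x = m.1
      · subst hxm; rw [mstep_self, mstep_self]
      · rw [mstep_other c m hxm, mstep_other c' m hxm]; exact hcc x hx

lemma OkMoves.mono {S S' : Set W} {c : W → Fin 5} {ms : List (W × Fin 5)}
    (h : OkMoves G S c ms) (hS : S = S') : OkMoves G S' c ms := hS ▸ h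


section Restrict

variable (T : Set W) [DecidablePred (· ∈ T)]

/-- restrict a move list to the subtype `T` -/
def osm (ms : List (W × Fin 5)) : List (↥T × Fin 5) :=
  ms.filterMap (fun m => if h : m.1 ∈ T then some ((⟨m.1, h⟩ : ↥T), m.2) else none)

@[simp] lemma osm_nil : osm T [] = [] := rfl

lemma osm_cons_mem {m : W × Fin 5} (h : m.1 ∈ T) (ms : List (W × Fin 5)) :
    osm T (m :: ms) = ((⟨m.1, h⟩ : ↥T), m.2) :: osm T ms := by
  simp [osm, List.filterMap_cons, h]

lemma osm_cons_not_mem {m : W × Fin 5} (h : m.1 ∉ T) (ms : List (W × Fin 5)) :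
    osm T (m :: ms) = osm T ms := by
  simp [osm, List.filterMap_cons, h]

lemma restrict_mstep_mem {m : W × Fin 5} (h : m.1 ∈ T) (c : W → Fin 5) :
    T.restrict (mstep c m) = mstep (T.restrict c) ((⟨m.1, h⟩ : ↥T), m.2) := by
  funext u
  by_cases hu : (u : W) = m.1
  · have : u = (⟨m.1, h⟩ : ↥T) := Subtype.ext hu
    rw [this]
    show mstep c m m.1 = _
    rw [mstep_self, mstep_self]
  · have : u ≠ (⟨m.1, h⟩ : ↥T) := fun hh => hu (by rw [hh])
    show mstep c m u = _
    rw [mstep_other c m hu, mstep_other _ _ this]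
    rfl

lemma restrict_mstep_not_mem {m : W × Fin 5} (h : m.1 ∉ T) (c : W → Fin 5) :
    T.restrict (mstep c m) = T.restrict c := by
  funext u
  show mstep c m u = c u
  exact mstep_other c m (fun hh => h (hh ▸ u.2))

lemma restrict_foldl (c : W → Fin 5) (ms : List (W × Fin 5)) :
    T.restrict (List.foldl mstep c ms) = List.foldl mstep (T.restrict c) (osm T ms) := by
  induction ms generalizing c with
  | nil => rfl
  | cons m ms ih =>
      by_cases h : m.1 ∈ T
      · rw [List.foldl_cons, ih, osm_cons_mem T h, List.foldl_cons, restrict_mstep_mem T h]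
      · rw [List.foldl_cons, ih, osm_cons_not_mem T h, restrict_mstep_not_mem T h]

lemma map_play (f : (W → Fin 5) → (↥T → Fin 5)) (c : W → Fin 5) (ms : List (W × Fin 5)) :
    (play c ms).map f = f c :: ((play c ms).tail).map f := by
  cases ms <;> simp [play_cons]

lemma destutter'_play [DecidableEq (↥T → Fin 5)] (c : W → Fin 5) (ms : List (W × Fin 5)) (h : EffMoves c ms) :
    List.destutter' (· ≠ ·) (T.restrict c) (((play c ms).tail).map T.restrict)
      = play (T.restrict c) (osm T ms) := by
  induction ms generalizing c with
  | nil => rfl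
  | cons m ms ih =>
      have htail : (play c (m :: ms)).tail = play (mstep c m) ms := by rw [play_cons]; rfl
      rw [htail, map_play]
      by_cases hm : m.1 ∈ T
      · have hne : T.restrict c ≠ T.restrict (mstep c m) := by
          intro hh
          apply h.1
          have := congrFun hh (⟨m.1, hm⟩ : ↥T)
          simpa [Set.restrict, mstep_self] using this.symm
        rw [List.destutter'_cons_pos _ hne, ih _ h.2, osm_cons_mem T hm, play_cons,
          restrict_mstep_mem T hm]
      · have heq : T.restrict (mstep c m) = T.restrict c := restrict_mstep_not_mem T hm c
        have hne : ¬ (T.restrict c ≠ T.restrict (mstep c m)) := by rw [heq]; simp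
        rw [List.destutter'_cons_neg _ hne, osm_cons_not_mem T hm, ← heq, ih _ h.2]

lemma destutter_play [DecidableEq (↥T → Fin 5)] (c : W → Fin 5) (ms : List (W × Fin 5)) (h : EffMoves c ms) :
    ((play c ms).map T.restrict).destutter (· ≠ ·) = play (T.restrict c) (osm T ms) := by
  rw [map_play, List.destutter_cons', destutter'_play T c ms h]

lemma countP_osm (ms : List (W × Fin 5)) (u : ↥T) :
    (osm T ms).countP (fun m => m.1 = u) = ms.countP (fun m => m.1 = (u : W)) := by
  induction ms with
  | nil => rfl
  | cons m ms ih =>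
      by_cases h : m.1 ∈ T
      · rw [osm_cons_mem T h, List.countP_cons, List.countP_cons, ih]
        congr 1
        by_cases hm : m.1 = (u : W)
        · simp [hm, Subtype.ext_iff]
        · simp [hm, Subtype.ext_iff]
      · rw [osm_cons_not_mem T h, List.countP_cons, ih]
        have : ¬ (m.1 = (u : W)) := fun hh => h (hh ▸ u.2)
        simp [this]

/-- lift a move list on the subtype to the full type -/
def liftm (ms' : List (↥T × Fin 5)) : List (W × Fin 5) :=
  ms'.map (fun m => ((m.1 : W), m.2))

@[simp] lemma osm_liftm (ms' : List (↥T × Fin 5)) : osm T (liftm T ms') = ms' := by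
  induction ms' with
  | nil => rfl
  | cons m ms ih =>
      have h : (m.1 : W) ∈ T := m.1.2
      rw [liftm, List.map_cons, ← liftm, osm_cons_mem T h, ih]

lemma restrict_mstep_liftm (c : W → Fin 5) (m : ↥T × Fin 5) :
    T.restrict (mstep c ((m.1 : W), m.2)) = mstep (T.restrict c) m := by
  rw [restrict_mstep_mem T m.1.2]

end Restrict

lemma exists_moves :
    ∀ (L : List (W → Fin 5)) (c0 : W → Fin 5), L.head? = some c0 →
    List.Chain' (fun c c' : W → Fin 5 => ∃! x, c x ≠ c' x) L →
    ∃ ms, play c0 ms = L ∧ EffMoves c0 ms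
  | [], c0, hh, _ => by simp at hh
  | [c], c0, hh, _ => by
      obtain rfl : c = c0 := by simpa using hh
      exact ⟨[], rfl, trivial⟩
  | c :: c' :: rest, c0, hh, hch => by
      obtain rfl : c = c0 := by simpa using hh
      obtain ⟨x, hx, hu⟩ := (List.isChain_cons_cons.mp hch).1
      have hstep : mstep c (x, c' x) = c' := by
        funext y
        by_cases hy : y = x
        · subst hy; exact mstep_self c (y, c' y)
        · rw [mstep_other c (x, c' x) hy]
          by_contra hne
          exact hy (hu y hne)
      obtain ⟨ms, hms, heff⟩ := exists_moves (c' :: rest) c' rfl (List.isChain_cons_cons.mp hch).2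
      refine ⟨(x, c' x) :: ms, ?_, ?_⟩
      · rw [play_cons, hstep, hms]
      · exact ⟨Ne.symm hx, by rw [hstep]; exact heff⟩

lemma foldl_agree_off {w : W} {c c' : W → Fin 5} (ms : List (W × Fin 5))
    (hagree : ∀ x, x ≠ w → c x = c' x) :
    ∀ x, x ≠ w → List.foldl mstep c ms x = List.foldl mstep c' ms x := by
  induction ms generalizing c c' with
  | nil => exact hagree
  | cons m ms ih =>
      rw [List.foldl_cons, List.foldl_cons]
      refine ih (fun x hx => ?_)
      by_cases hxm : x = m.1
      · subst hxm; rw [mstep_self, mstep_self]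
      · rw [mstep_other c m hxm, mstep_other c' m hxm]; exact hagree x hx

section Ins

variable (w : W) (B : Finset W) (k : ℕ) (βw : Fin 5)

/-- colours of the next `k` moves on vertices of `B` -/
def threatCols (ms : List (W × Fin 5)) : List (Fin 5) :=
  ((ms.filter (fun m => m.1 ∈ B)).take k).map Prod.snd

noncomputable def pickAvoid (A : Finset (Fin 5)) : Fin 5 :=
  if h : (Aᶜ : Finset (Fin 5)).Nonempty then h.choose else 0

lemma pickAvoid_not_mem {A : Finset (Fin 5)} (h : A.card < 5) : pickAvoid A ∉ A := by
  have hne : (Aᶜ : Finset (Fin 5)).Nonempty := by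
    rw [← Finset.card_pos, Finset.card_compl]
    simpa using h
  rw [pickAvoid, dif_pos hne]
  have := hne.choose_spec
  rw [Finset.mem_compl] at this
  exact this

/-- the avoid set used when a forced recolouring of `w` happens -/
def avoidSet (c : W → Fin 5) (m : W × Fin 5) (ms : List (W × Fin 5)) : Finset (Fin 5) :=
  (B.image c) ∪ insert m.2 (threatCols B k ms).toFinset

lemma avoidSet_card (hcard : B.card + k ≤ 3) (c : W → Fin 5) (m : W × Fin 5)
    (ms : List (W × Fin 5)) : (avoidSet B k c m ms).card < 5 := by
  have h1 : (B.image c).card ≤ B.card := Finset.card_image_le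
  have h2 : (threatCols B k ms).toFinset.card ≤ k := by
    calc (threatCols B k ms).toFinset.card ≤ (threatCols B k ms).length :=
          (threatCols B k ms).toFinset_card_le
      _ ≤ k := by
          rw [threatCols, List.length_map]
          exact (List.length_take_le _ _).trans (le_refl _)
  calc (avoidSet B k c m ms).card
      ≤ (B.image c).card + (insert m.2 (threatCols B k ms).toFinset).card :=
        Finset.card_union_le _ _
    _ ≤ B.card + (1 + k) := by
        refine Nat.add_le_add h1 ?_
        exact (Finset.card_insert_le _ _).trans (by omega)
    _ < 5 := by omega

/-- insert moves of `w` into a move sequence, recolouring `w` when forced,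
and finally setting it to `βw`. -/
noncomputable def ins (c : W → Fin 5) : List (W × Fin 5) → List (W × Fin 5)
  | [] => if c w = βw then [] else [(w, βw)]
  | m :: ms =>
    if m.1 ∈ B ∧ m.2 = c w then
      let γ := pickAvoid (avoidSet B k c m ms)
      (w, γ) :: m :: ins (mstep (mstep c (w, γ)) m) ms
    else m :: ins (mstep c m) ms

lemma ins_nil (c : W → Fin 5) :
    ins w B k βw c [] = if c w = βw then [] else [(w, βw)] := rfl

lemma ins_cons_forced {c : W → Fin 5} {m : W × Fin 5} {ms : List (W × Fin 5)}
    (h : m.1 ∈ B ∧ m.2 = c w) :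
    ins w B k βw c (m :: ms) =
      (w, pickAvoid (avoidSet B k c m ms)) :: m ::
        ins w B k βw (mstep (mstep c (w, pickAvoid (avoidSet B k c m ms))) m) ms := by
  rw [ins, if_pos h]

lemma ins_cons_free {c : W → Fin 5} {m : W × Fin 5} {ms : List (W × Fin 5)}
    (h : ¬ (m.1 ∈ B ∧ m.2 = c w)) :
    ins w B k βw c (m :: ms) = m :: ins w B k βw (mstep c m) ms := by
  rw [ins, if_neg h]

variable {G : SimpleGraph W} {S T : Set W} [DecidablePred (· ∈ T)]

lemma ins_spec (hw : w ∉ S) (hwT : w ∉ T)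
    (hB : ∀ u, u ∈ B ↔ u ∈ S ∧ G.Adj w u) (hcard : B.card + k ≤ 3) :
    ∀ (ms : List (W × Fin 5)) (c : W → Fin 5),
    OkMoves G S c ms →
    (∀ u ∈ B, c w ≠ c u) →
    (∀ u ∈ B, βw ≠ List.foldl mstep c ms u) →
    OkMoves G (insert w S) c (ins w B k βw c ms)
    ∧ List.foldl mstep c (ins w B k βw c ms)
        = Function.update (List.foldl mstep c ms) w βw
    ∧ (∀ x, x ≠ w → (ins w B k βw c ms).countP (fun m => m.1 = x)
        = ms.countP (fun m => m.1 = x))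
    ∧ osm T (ins w B k βw c ms) = osm T ms := by
  intro ms
  induction ms with
  | nil =>
      intro c _ _ hfin
      rw [ins_nil]
      by_cases hc : c w = βw
      · rw [if_pos hc]
        refine ⟨trivial, ?_, fun x _ => rfl, rfl⟩
        simp only [List.foldl_nil]
        rw [← hc, Function.update_eq_self]
      · rw [if_neg hc]
        refine ⟨?_, rfl, ?_, ?_⟩
        · refine ⟨Set.mem_insert _ _, fun hh => hc hh.symm, ?_, trivial⟩
          intro u hu hadj
          rcases Set.mem_insert_iff.mp hu with heq | hu
          · exact absurd (heq ▸ hadj) (G.irrefl)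
          · exact hfin u ((hB u).mpr ⟨hu, hadj⟩)
        · intro x hx
          simp [List.countP_cons, hx, Ne.symm hx]
        · rw [osm_cons_not_mem T hwT, osm_nil]
  | cons m ms ih =>
      intro c hok hcw hfin
      obtain ⟨hm1, hm2, hm3, hok'⟩ := hok
      have hm1w : m.1 ≠ w := fun hh => hw (hh ▸ hm1)
      by_cases hf : m.1 ∈ B ∧ m.2 = c w
      · -- forced case
        set γ := pickAvoid (avoidSet B k c m ms) with hγdef
        have hγ : γ ∉ avoidSet B k c m ms := pickAvoid_not_mem (avoidSet_card B k hcard c m ms)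
        have hγB : ∀ u ∈ B, γ ≠ c u := by
          intro u hu hh
          exact hγ (Finset.mem_union_left _ (Finset.mem_image.mpr ⟨u, hu, hh.symm⟩))
        have hγm : γ ≠ m.2 := by
          intro hh
          exact hγ (by rw [avoidSet, hh]; exact Finset.mem_union_right _ (Finset.mem_insert_self _ _))
        rw [ins_cons_forced w B k βw hf, ← hγdef]
        set cw := mstep c (w, γ) with hcwdef
        set c2 := mstep cw m with hc2def
        have hcwx : ∀ x, x ≠ w → cw x = c x := by
          intro x hx
          exact mstep_other c (w, γ) hx
        have hc2c1 : ∀ x, x ≠ w → c2 x = mstep c m x := by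
          intro x hx
          by_cases hxm : x = m.1
          · subst hxm; rw [hc2def, mstep_self, mstep_self]
          · rw [hc2def, mstep_other cw m hxm, mstep_other c m hxm, hcwx x hx]
        have hok2 : OkMoves G S c2 ms := by
          refine OkMoves.congr hok' (fun x hx => ?_)
          exact (hc2c1 x (fun hh => hw (hh ▸ hx))).symm
        have hcw2 : ∀ u ∈ B, c2 w ≠ c2 u := by
          intro u hu
          have hu1 : u ≠ w := fun hh => hw (hh ▸ ((hB u).mp hu).1)
          have hw2 : c2 w = γ := by
            rw [hc2def, mstep_other cw m (Ne.symm hm1w), hcwdef, mstep_self]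
          rw [hw2]
          by_cases hum : u = m.1
          · subst hum
            rw [hc2def, mstep_self]
            exact hγm
          · rw [hc2def, mstep_other cw m hum, hcwx u hu1]
            exact hγB u hu
        have hfin2 : ∀ u ∈ B, βw ≠ List.foldl mstep c2 ms u := by
          intro u hu
          have hu1 : u ≠ w := fun hh => hw (hh ▸ ((hB u).mp hu).1)
          rw [foldl_agree_off ms hc2c1 u hu1]
          have := hfin u hu
          rwa [List.foldl_cons] at this
        obtain ⟨ihA, ihB, ihC, ihD⟩ := ih c2 hok2 hcw2 hfin2
        refine ⟨?_, ?_, ?_, ?_⟩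
        · refine ⟨Set.mem_insert _ _, ?_, ?_, ?_⟩
          · rw [← hf.2]; exact hγm
          · intro u hu hadj
            rcases Set.mem_insert_iff.mp hu with heq | hu
            · exact absurd (heq ▸ hadj) (G.irrefl)
            · exact hγB u ((hB u).mpr ⟨hu, hadj⟩)
          · refine ⟨Set.mem_insert_of_mem _ hm1, ?_, ?_, ihA⟩
            · show m.2 ≠ cw m.1
              rw [hcwdef, mstep_other c (w, γ) hm1w]
              exact hm2
            · intro u hu hadj
              rcases Set.mem_insert_iff.mp hu with heq | hu
              · show m.2 ≠ cw u
                rw [heq, hcwdef]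
                show m.2 ≠ mstep c (w, γ) w
                rw [mstep_self]
                exact Ne.symm hγm
              · show m.2 ≠ cw u
                rw [hcwx u (fun hh => hw (hh ▸ hu))]
                exact hm3 u hu hadj
        · rw [List.foldl_cons, List.foldl_cons, ihB, List.foldl_cons]
          funext x
          by_cases hxw : x = w
          · subst hxw
            rw [Function.update_self, Function.update_self]
          · rw [Function.update_of_ne hxw, Function.update_of_ne hxw]
            exact foldl_agree_off ms hc2c1 x hxw
        · intro x hx
          rw [List.countP_cons, List.countP_cons, List.countP_cons, ihC x hx]
          simp [Ne.symm hx]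
        · rw [osm_cons_not_mem T hwT]
          by_cases hmT : m.1 ∈ T
          · rw [osm_cons_mem T hmT, osm_cons_mem T hmT, ihD]
          · rw [osm_cons_not_mem T hmT, osm_cons_not_mem T hmT, ihD]
      · -- free case
        rw [ins_cons_free w B k βw hf]
        have hcw1 : ∀ u ∈ B, mstep c m w ≠ mstep c m u := by
          intro u hu
          rw [mstep_other c m (Ne.symm hm1w)]
          by_cases hum : u = m.1
          · subst hum
            rw [mstep_self]
            intro hh
            exact hf ⟨hu, hh.symm⟩
          · rw [mstep_other c m hum]
            exact hcw u hu
        have hfin1 : ∀ u ∈ B, βw ≠ List.foldl mstep (mstep c m) ms u := by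
          intro u hu
          have := hfin u hu
          rwa [List.foldl_cons] at this
        obtain ⟨ihA, ihB, ihC, ihD⟩ := ih (mstep c m) hok' hcw1 hfin1
        refine ⟨?_, ?_, ?_, ?_⟩
        · refine ⟨Set.mem_insert_of_mem _ hm1, hm2, ?_, ihA⟩
          intro u hu hadj
          rcases Set.mem_insert_iff.mp hu with heq | hu
          · intro hh
            exact hf ⟨(hB m.1).mpr ⟨hm1, G.adj_symm (heq ▸ hadj)⟩, heq ▸ hh⟩
          · exact hm3 u hu hadj
        · rw [List.foldl_cons, ihB, List.foldl_cons]
        · intro x hx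
          rw [List.countP_cons, List.countP_cons, ihC x hx]
        · by_cases hmT : m.1 ∈ T
          · rw [osm_cons_mem T hmT, osm_cons_mem T hmT, ihD]
          · rw [osm_cons_not_mem T hmT, osm_cons_not_mem T hmT, ihD]

lemma threatCols_zero (ms : List (W × Fin 5)) : threatCols B 0 ms = [] := by
  simp [threatCols]

lemma threatCols_cons_nonmem {m : W × Fin 5} (h : m.1 ∉ B) (j : ℕ) (ms : List (W × Fin 5)) :
    threatCols B j (m :: ms) = threatCols B j ms := by
  simp [threatCols, List.filter_cons, h]

lemma threatCols_cons_mem {m : W × Fin 5} (h : m.1 ∈ B) (j : ℕ) (ms : List (W × Fin 5)) :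
    threatCols B (j + 1) (m :: ms) = m.2 :: threatCols B j ms := by
  simp [threatCols, List.filter_cons, h]

lemma threatCols_subset {j : ℕ} (h : j ≤ k) (ms : List (W × Fin 5)) :
    ∀ x ∈ threatCols B j ms, x ∈ threatCols B k ms := by
  intro x hx
  rw [threatCols] at hx ⊢
  have : (List.filter (fun m => decide (m.1 ∈ B)) ms).take j
      = ((List.filter (fun m => decide (m.1 ∈ B)) ms).take k).take j := by
    rw [List.take_take, Nat.min_eq_left h]
  rw [this] at hx
  exact List.map_subset _ (List.take_subset _ _) hx

lemma ins_count (hwB : w ∉ B) (hk : 1 ≤ k) (hcard : B.card + k ≤ 3) :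
    ∀ (ms : List (W × Fin 5)) (c : W → Fin 5) (j : ℕ),
    (∀ m ∈ ms, m.1 ≠ w) →
    j ≤ ms.countP (fun m => m.1 ∈ B) →
    (c w) ∉ threatCols B j ms →
    (k + 1) * (ins w B k βw c ms).countP (fun m => m.1 = w) + j
      ≤ ms.countP (fun m => m.1 ∈ B) + 2 * k + 1 := by
  intro ms
  induction ms with
  | nil =>
      intro c j _ hj _
      simp only [List.countP_nil, Nat.le_zero] at hj
      subst hj
      rw [ins_nil]
      by_cases hc : c w = βw
      · rw [if_pos hc]
        simp
      · rw [if_neg hc]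
        have : List.countP (fun m => decide (m.1 = w)) [(w, βw)] = 1 := by simp
        rw [this]
        omega
  | cons m ms ih =>
      intro c j hms hj hthreat
      have hmw : m.1 ≠ w := hms m List.mem_cons_self
      have hms' : ∀ m' ∈ ms, m'.1 ≠ w := fun m' hm' => hms m' (List.mem_cons_of_mem _ hm')
      by_cases hmB : m.1 ∈ B
      · have hM : (m :: ms).countP (fun m => decide (m.1 ∈ B))
            = ms.countP (fun m => decide (m.1 ∈ B)) + 1 := by
          rw [List.countP_cons]
          simp [hmB]
        rcases j with _ | j'
        · -- j = 0
          by_cases hf : m.2 = c w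
          · -- forced
            have hff : m.1 ∈ B ∧ m.2 = c w := ⟨hmB, hf⟩
            rw [ins_cons_forced w B k βw hff]
            set γ := pickAvoid (avoidSet B k c m ms) with hγdef
            have hγ : γ ∉ avoidSet B k c m ms :=
              pickAvoid_not_mem (avoidSet_card B k hcard c m ms)
            have hγk : γ ∉ threatCols B k ms := by
              intro hh
              exact hγ (Finset.mem_union_right _
                (Finset.mem_insert_of_mem (List.mem_toFinset.mpr hh)))
            set c2 := mstep (mstep c (w, γ)) m with hc2def
            have hc2w : c2 w = γ := by
              rw [hc2def, mstep_other _ m (Ne.symm hmw), mstep_self]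
            set M' := ms.countP (fun m => decide (m.1 ∈ B)) with hM'def
            set j' := min k M' with hj'def
            have hsub : c2 w ∉ threatCols B j' ms := by
              rw [hc2w]
              intro hh
              exact hγk (threatCols_subset B k (Nat.min_le_left _ _) ms γ hh)
            have hjM : j' ≤ M' := Nat.min_le_right _ _
            have IH := ih c2 j' hms' hjM hsub
            have h1 : List.countP (fun m => decide (m.1 = w))
                ((w, γ) :: m :: ins w B k βw c2 ms)
                = List.countP (fun m => decide (m.1 = w)) (ins w B k βw c2 ms) + 1 := by
              rw [List.countP_cons, List.countP_cons]
              simp [hmw]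
            rw [h1, hM, Nat.mul_add, Nat.mul_one]
            rcases Nat.le_total k M' with hkM | hkM
            · have hjk : j' = k := Nat.min_eq_left hkM
              omega
            · have hjM2 : j' = M' := Nat.min_eq_right hkM
              have h2 : List.countP (fun m => decide (m.1 = w)) (ins w B k βw c2 ms) ≤ 1 := by
                by_contra hgt
                push_neg at hgt
                have h3 : (k + 1) * 2 ≤
                    (k + 1) * List.countP (fun m => decide (m.1 = w)) (ins w B k βw c2 ms) :=
                  Nat.mul_le_mul_left _ hgt
                omega
              have h4 : (k + 1) * List.countP (fun m => decide (m.1 = w)) (ins w B k βw c2 ms)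
                  ≤ (k + 1) * 1 :=
                Nat.mul_le_mul_left _ h2
              rw [Nat.mul_one] at h4
              omega
          · -- not forced
            have hnf : ¬ (m.1 ∈ B ∧ m.2 = c w) := fun hh => hf hh.2
            rw [ins_cons_free w B k βw hnf, List.countP_cons]
            have hc1w : mstep c m w = c w := mstep_other c m (Ne.symm hmw)
            have IH := ih (mstep c m) 0 hms' (Nat.zero_le _) (by
              rw [threatCols_zero]; exact List.not_mem_nil)
            have h1 : (if decide (m.1 = w) = true then 1 else 0) = 0 := by simp [hmw]
            rw [h1, hM]
            simp only [Nat.add_zero]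
            omega
        · -- j = j' + 1
          rw [threatCols_cons_mem B hmB j' ms, List.mem_cons] at hthreat
          push_neg at hthreat
          have hnf : ¬ (m.1 ∈ B ∧ m.2 = c w) := fun hh => hthreat.1 hh.2.symm
          rw [ins_cons_free w B k βw hnf, List.countP_cons]
          have hc1w : mstep c m w = c w := mstep_other c m (Ne.symm hmw)
          have hj2 : j' ≤ ms.countP (fun m => decide (m.1 ∈ B)) := by
            rw [hM] at hj
            omega
          have IH := ih (mstep c m) j' hms' hj2 (by rw [hc1w]; exact hthreat.2)
          have h1 : (if decide (m.1 = w) = true then 1 else 0) = 0 := by simp [hmw]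
          rw [h1, hM]
          simp only [Nat.add_zero]
          omega
      · -- m.1 ∉ B
        have hnf : ¬ (m.1 ∈ B ∧ m.2 = c w) := fun hh => hmB hh.1
        rw [ins_cons_free w B k βw hnf, List.countP_cons]
        have hc1w : mstep c m w = c w := mstep_other c m (Ne.symm hmw)
        have hM : (m :: ms).countP (fun m => decide (m.1 ∈ B))
            = ms.countP (fun m => decide (m.1 ∈ B)) := by
          rw [List.countP_cons]
          simp [hmB]
        have IH := ih (mstep c m) j hms' (by rwa [hM] at hj) (by
          rw [hc1w]
          rwa [threatCols_cons_nonmem B hmB] at hthreat)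
        have h1 : (if decide (m.1 = w) = true then 1 else 0) = 0 := by simp [hmw]
        rw [h1, hM]
        simp only [Nat.add_zero]
        omega

end Ins

lemma mem_play_self (c : W → Fin 5) (ms : List (W × Fin 5)) : c ∈ play c ms := by
  cases ms <;> simp

lemma countP_eq_sum (B : Finset W) (ms : List (W × Fin 5)) :
    ms.countP (fun m => m.1 ∈ B) = ∑ u ∈ B, ms.countP (fun m => m.1 = u) := by
  induction ms with
  | nil => simp
  | cons m ms ih =>
      rw [List.countP_cons]
      have : ∀ u ∈ B, (ms.countP (fun m => m.1 = u) : ℕ)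
          + (if decide (m.1 = u) = true then 1 else 0)
          = List.countP (fun m' => decide (m'.1 = u)) (m :: ms) := by
        intro u _
        rw [List.countP_cons]
      rw [← Finset.sum_congr rfl this, Finset.sum_add_distrib, ← ih]
      congr 1
      have h2 : ∀ u ∈ B, (if decide (m.1 = u) = true then 1 else 0)
          = (if m.1 = u then 1 else 0) := by
        intro u _
        by_cases h : m.1 = u <;> simp [h]
      rw [Finset.sum_congr rfl h2, Finset.sum_ite_eq B m.1 (fun _ => 1)]
      by_cases h : m.1 ∈ B <;> simp [h]

end Machinery


lemma lift_ok {W : Type*} [DecidableEq W] {G : SimpleGraph W}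
    {T : Set W} [DecidablePred (· ∈ T)] :
    ∀ (ms' : List (↥T × Fin 5)) (c : W → Fin 5),
    EffMoves (T.restrict c) ms' →
    (∀ d ∈ play (T.restrict c) ms', Proper (G.induce T) d) →
    OkMoves G T c (liftm T ms') := by
  intro ms'
  induction ms' with
  | nil => intro c _ _; trivial
  | cons m ms' ih =>
      intro c heff hprop
      have hstep : T.restrict (mstep c ((m.1 : W), m.2)) = mstep (T.restrict c) m :=
        restrict_mstep_liftm T c m
      refine ⟨m.1.2, heff.1, ?_, ?_⟩
      · intro u hu hadj
        have hd : mstep (T.restrict c) m ∈ play (T.restrict c) (m :: ms') :=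
          by rw [play_cons]; exact List.mem_cons_of_mem _ (mem_play_self _ _)
        have hprop2 := hprop _ hd
        have hadj' : (G.induce T).Adj m.1 ⟨u, hu⟩ := by
          simp only [SimpleGraph.induce]
          exact hadj
        have := hprop2 hadj'
        rw [mstep_self] at this
        have hne : (⟨u, hu⟩ : ↥T) ≠ m.1 := by
          intro hh
          have hu2 : u = (m.1 : W) := congrArg Subtype.val hh
          rw [hu2] at hadj
          exact G.irrefl hadj
        rwa [mstep_other (T.restrict c) m hne] at this
      · refine ih _ (by rw [hstep]; exact heff.2) ?_
        intro d hd
        refine hprop d ?_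
        rw [play_cons, ← hstep]
        exact List.mem_cons_of_mem _ hd

lemma cseq_le_6146 : ∀ n, cseq n ≤ 6146 := by
  intro n
  induction n with
  | zero => norm_num [cseq]
  | succ n ih => rw [cseq]; omega

lemma cseq_mono : ∀ {m n : ℕ}, m ≤ n → cseq m ≤ cseq n := by
  intro m n h
  induction n with
  | zero => simp_all
  | succ n ih =>
      rcases Nat.lt_or_ge m (n+1) with h2 | h2
      · have := ih (by omega)
        have h3 := cseq_le_6146 n
        rw [cseq]
        omega
      · have : m = n + 1 := by omega
        rw [this]

lemma cseq_11 : cseq 11 = 6143 := by norm_num [cseq]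



abbrev Tset {V : Type*} (H : Finset V) : Set V := {u : V | u ∉ H}


/-- island lifting -/
theorem stmt13 {V : Type*} [Fintype V] [DecidableEq V] (G : SimpleGraph V)
    (H : Finset V) (t : ℕ) (v : Fin t → V) (hisl : IsIsland G H t v)
    (ht : t ≤ 12) (hcard : H.card = t)
    (α β : V → Fin 5) (hα : Proper G α) (hβ : Proper G β)
    (L' : List (↥{u : V | u ∉ H} → Fin 5))
    (hL' : RecolSeq (G.induce {u : V | u ∉ H}) L')
    (hhead : L'.head? = some fun u : ↥{u : V | u ∉ H} => α u)
    (hlast : L'.getLast? = some fun u : ↥{u : V | u ∉ H} => β u)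
    (hbound : ∀ u : ↥{u : V | u ∉ H}, recolCount L' u ≤ 6143) :
    ∃ L : List (V → Fin 5), RecolSeq G L ∧
      L.head? = some α ∧ L.getLast? = some β ∧
      (L.map fun c => fun u : ↥{u : V | u ∉ H} => c u).destutter (· ≠ ·) = L' ∧
      (∀ i : Fin t, recolCount L (v i) ≤ cseq i) ∧
      (∀ x ∈ H, recolCount L x ≤ 6143) := by
  classical
  obtain ⟨hinj, hmemH, hsurj, hout, hdeg⟩ := hisl
  obtain ⟨ms', hplay', heff'⟩ := exists_moves L' ((Tset H).restrict α) hhead hL'.2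
  have hlast' : List.foldl mstep ((Tset H).restrict α) ms' = (Tset H).restrict β := by
    have h := play_getLast? ((Tset H).restrict α) ms'
    rw [hplay', hlast] at h
    exact (Option.some_inj.mp h).symm
  set S : ℕ → Set V := fun i => {x | x ∉ H ∨ ∃ j : Fin t, (j : ℕ) < i ∧ v j = x}
    with hSdef
  have hSmem : ∀ n x, x ∈ S n ↔ (x ∉ H ∨ ∃ j : Fin t, (j : ℕ) < n ∧ v j = x) :=
    fun n x => Iff.rfl
  have hS0 : S 0 = (Tset H) := by
    ext x
    rw [hSmem]
    simp [Tset]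
  have hSt : S t = Set.univ := by
    ext x
    rw [hSmem]
    simp only [Set.mem_univ, iff_true]
    by_cases hx : x ∈ H
    · obtain ⟨j, hj⟩ := hsurj x hx
      exact Or.inr ⟨j, j.2, hj⟩
    · exact Or.inl hx
  have houtcount : ∀ (ms : List (V × Fin 5)), osm (Tset H) ms = ms' → ∀ u : V, u ∉ H →
      ms.countP (fun m => m.1 = u) ≤ 6143 := by
    intro ms hosm u hu
    have hu' : u ∈ (Tset H) := hu
    have h1 := countP_osm (Tset H) ms ⟨u, hu'⟩
    rw [hosm] at h1
    rw [← h1]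
    have h2 := recolCount_play ((Tset H).restrict α) ms' heff' ⟨u, hu'⟩
    rw [hplay'] at h2
    rw [← h2]
    exact hbound _
  have KEY : ∀ i, i ≤ t → ∃ ms : List (V × Fin 5),
      OkMoves G (S i) α ms ∧
      List.foldl mstep α ms = (S i).piecewise β α ∧
      osm (Tset H) ms = ms' ∧
      (∀ j : Fin t, (j : ℕ) < i → ms.countP (fun m => m.1 = v j) ≤ cseq j) := by
    intro i
    induction i with
    | zero =>
        intro _
        refine ⟨liftm (Tset H) ms', ?_, ?_, osm_liftm (Tset H) ms',
          fun j hj => absurd hj (by omega)⟩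
        · rw [hS0]
          refine lift_ok ms' α heff' ?_
          intro d hd
          rw [hplay'] at hd
          exact hL'.1 d hd
        · funext x
          by_cases hx : x ∈ Tset H
          · have h3 : ((Tset H).restrict (List.foldl mstep α (liftm (Tset H) ms'))) ⟨x, hx⟩
                = ((Tset H).restrict β) ⟨x, hx⟩ := by
              rw [restrict_foldl, osm_liftm, hlast']
            rw [Set.piecewise_eq_of_mem _ _ _ ((hSmem 0 x).mpr (Or.inl hx))]
            exact h3
          · have hmem : ∀ m ∈ liftm (Tset H) ms', m.1 ∈ (Tset H) := by
              intro m hm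
              rw [liftm, List.mem_map] at hm
              obtain ⟨a, _, rfl⟩ := hm
              exact a.1.2
            have hnot : x ∉ S 0 := by
              intro hmem2
              rcases (hSmem 0 x).mp hmem2 with h | ⟨j, hj, _⟩
              · exact hx h
              · omega
            rw [foldl_eq_off hmem hx, Set.piecewise_eq_of_notMem _ _ _ hnot]
    | succ i ih =>
        intro hit
        have hi : i < t := hit
        obtain ⟨ms, hok, hfold, hosm, hcnt⟩ := ih (le_of_lt hi)
        set ii : Fin t := ⟨i, hi⟩ with hiidef
        set w : V := v ii with hwdef
        have hwH : w ∈ H := hmemH ii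
        have hwS : w ∉ S i := by
          intro hw
          rcases (hSmem i w).mp hw with hw | ⟨j, hj, hjw⟩
          · exact hw hwH
          · have h2 := hinj hjw
            have h3 : (j : ℕ) = i := by rw [h2]
            omega
        have hwT : w ∉ (Tset H) := fun hh => hh hwH
        have hSsucc : S (i + 1) = insert w (S i) := by
          ext x
          rw [hSmem, Set.mem_insert_iff, hSmem]
          constructor
          · rintro (hx | ⟨j, hj, hjx⟩)
            · exact Or.inr (Or.inl hx)
            · rcases Nat.lt_or_ge (j : ℕ) i with hji | hji
              · exact Or.inr (Or.inr ⟨j, hji, hjx⟩)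
              · have h4 : j = ii := Fin.ext (show (j : ℕ) = i by omega)
                exact Or.inl (by rw [← hjx, h4])
          · rintro (rfl | hx | ⟨j, hj, hjx⟩)
            · exact Or.inr ⟨ii, Nat.lt_succ_self i, rfl⟩
            · exact Or.inl hx
            · exact Or.inr ⟨j, by omega, hjx⟩
        set Bs : Set V := G.neighborSet w ∩ S i with hBsdef
        have hBfin : Bs.Finite := Set.toFinite _
        set B : Finset V := hBfin.toFinset with hBdef
        have hBiff : ∀ u, u ∈ B ↔ u ∈ S i ∧ G.Adj w u := by
          intro u
          rw [hBdef, Set.Finite.mem_toFinset]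
          exact ⟨fun h => ⟨h.2, h.1⟩, fun h => ⟨h.2, h.1⟩⟩
        have hBcard : B.card ≤ 2 := by
          have h1 := hdeg ii
          have h2 : Bs = G.neighborSet (v ii) ∩
              ((H : Set V)ᶜ ∪ {x | ∃ j : Fin t, j < ii ∧ v j = x}) := by
            ext x
            rw [hBsdef]
            simp only [Set.mem_inter_iff, Set.mem_union, Set.mem_compl_iff,
              Set.mem_setOf_eq, hSmem, ← hwdef, Finset.mem_coe]
            constructor
            · rintro ⟨ha, hb | ⟨j, hj, hjx⟩⟩
              · exact ⟨ha, Or.inl hb⟩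
              · exact ⟨ha, Or.inr ⟨j, hj, hjx⟩⟩
            · rintro ⟨ha, hb | ⟨j, hj, hjx⟩⟩
              · exact ⟨ha, Or.inl hb⟩
              · exact ⟨ha, Or.inr ⟨j, hj, hjx⟩⟩
          have h3 : B.card = Bs.ncard := (Set.ncard_eq_toFinset_card Bs hBfin).symm
          rw [h3, h2]
          exact h1
        have hwB : w ∉ B := fun hh => hwS ((hBiff w).mp hh).1
        have hcw : ∀ u ∈ B, α w ≠ α u := fun u hu => hα ((hBiff u).mp hu).2
        have hfin : ∀ u ∈ B, β w ≠ List.foldl mstep α ms u := by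
          intro u hu
          obtain ⟨huS, huadj⟩ := (hBiff u).mp hu
          rw [hfold, Set.piecewise_eq_of_mem _ _ _ huS]
          exact hβ huadj
        obtain ⟨okA, okB, okC, okD⟩ :=
          ins_spec w B (3 - B.card) (β w) hwS hwT hBiff (by omega) ms α hok hcw hfin
        refine ⟨ins w B (3 - B.card) (β w) α ms, ?_, ?_, ?_, ?_⟩
        · exact OkMoves.mono okA hSsucc.symm
        · rw [okB, hfold]
          funext x
          by_cases hxw : x = w
          · rw [hxw, Function.update_self,
              Set.piecewise_eq_of_mem _ _ _ (by rw [hSsucc]; exact Set.mem_insert _ _)]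
          · rw [Function.update_of_ne hxw]
            by_cases hxS : x ∈ S i
            · rw [Set.piecewise_eq_of_mem _ _ _ hxS,
                Set.piecewise_eq_of_mem _ _ _
                  (by rw [hSsucc]; exact Set.mem_insert_of_mem _ hxS)]
            · rw [Set.piecewise_eq_of_notMem _ _ _ hxS,
                Set.piecewise_eq_of_notMem _ _ _ (by
                  rw [hSsucc]
                  intro hh
                  rcases Set.mem_insert_iff.mp hh with h | h
                  · exact hxw h
                  · exact hxS h)]
        · rw [okD, hosm]
        · intro j hj
          rcases Nat.lt_or_ge (j : ℕ) i with hji | hji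
          · rw [okC (v j) (fun hh => by
              have h5 := hinj hh
              have h6 : (j : ℕ) = i := by rw [h5]
              omega)]
            exact hcnt j hji
          · have hjii : j = ii := Fin.ext (show (j : ℕ) = i by omega)
            rw [hjii, ← hwdef]
            -- counting for the new vertex w
            have hms : ∀ m ∈ ms, m.1 ≠ w :=
              fun m hm hh => hwS (hh ▸ OkMoves.mem hok m hm)
            have hcount := ins_count w B (3 - B.card) (β w) hwB (by omega) (by omega)
              ms α 0 hms (Nat.zero_le _)
              (by rw [threatCols_zero]; exact List.not_mem_nil)
            set cnt := (ins w B (3 - B.card) (β w) α ms).countP (fun m => m.1 = w)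
              with hcntdef
            set M := ms.countP (fun m => m.1 ∈ B) with hMdef
            have hMsum : M = ∑ u ∈ B, ms.countP (fun m => m.1 = u) := countP_eq_sum B ms
            set B2 : Finset V := B.filter (fun u => u ∈ H) with hB2def
            set B1 : Finset V := B.filter (fun u => ¬ (u ∈ H)) with hB1def
            have hsplit : ∑ u ∈ B2, ms.countP (fun m => m.1 = u)
                + ∑ u ∈ B1, ms.countP (fun m => m.1 = u)
                = ∑ u ∈ B, ms.countP (fun m => m.1 = u) :=
              Finset.sum_filter_add_sum_filter_not B _ _
            have hcardsplit : B2.card + B1.card = B.card := by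
              rw [hB2def, hB1def]
              exact Finset.card_filter_add_card_filter_not _
            have hB1card : B1.card ≤ 1 := by
              have h1 := hout w hwH
              have h2 : (B1 : Set V) ⊆ G.neighborSet w \ (H : Set V) := by
                intro u hu
                rw [hB1def] at hu
                simp only [Finset.coe_filter, Set.mem_setOf_eq] at hu
                exact ⟨((hBiff u).mp hu.1).2, hu.2⟩
              calc B1.card = (B1 : Set V).ncard := (Set.ncard_coe_finset _).symm
                _ ≤ (G.neighborSet w \ (H : Set V)).ncard :=
                    Set.ncard_le_ncard h2 (Set.toFinite _)
                _ ≤ 1 := h1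
            have hS1 : ∑ u ∈ B1, ms.countP (fun m => m.1 = u) ≤ B1.card * 6143 := by
              have := Finset.sum_le_card_nsmul B1 (fun u => ms.countP (fun m => m.1 = u))
                6143 (fun u hu => houtcount ms hosm u (Finset.mem_filter.mp hu).2)
              simpa using this
            have hS2 : ∑ u ∈ B2, ms.countP (fun m => m.1 = u)
                ≤ B2.card * cseq (i - 1) := by
              have hb : ∀ u ∈ B2, ms.countP (fun m => m.1 = u) ≤ cseq (i - 1) := by
                intro u hu
                obtain ⟨huB, huH⟩ := Finset.mem_filter.mp hu
                obtain ⟨huS, _⟩ := (hBiff u).mp huB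
                rcases (hSmem i u).mp huS with h | ⟨j, hj, hju⟩
                · exact absurd huH h
                · rw [← hju]
                  exact (hcnt j hj).trans (cseq_mono (by omega))
              have := Finset.sum_le_card_nsmul B2 (fun u => ms.countP (fun m => m.1 = u))
                (cseq (i - 1)) hb
              simpa using this
            have hB2pos : 0 < B2.card → 1 ≤ i := by
              intro hpos
              obtain ⟨u, hu⟩ := Finset.card_pos.mp hpos
              obtain ⟨huB, huH⟩ := Finset.mem_filter.mp hu
              obtain ⟨huS, _⟩ := (hBiff u).mp huB
              rcases (hSmem i u).mp huS with h | ⟨j, hj, _⟩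
              · exact absurd huH h
              · omega
            have hcq : cseq (i - 1) ≤ 6143 := by
              have h1 : cseq (i - 1) ≤ cseq 11 := cseq_mono (by omega)
              rw [cseq_11] at h1
              exact h1
            have hcseq0 : cseq 0 = 2049 := rfl
            have hrec : 1 ≤ i → cseq i = (6143 + cseq (i - 1) + 1) / 2 + 1 := by
              intro h
              obtain ⟨n, hn⟩ := Nat.exists_eq_succ_of_ne_zero (by omega : i ≠ 0)
              rw [hn]
              simp [cseq]
            have hgoal : cnt ≤ cseq i := by
              have hM2 : M ≤ B2.card * cseq (i - 1) + B1.card * 6143 := by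
                rw [hMsum, ← hsplit]
                omega
              rcases (by omega : B1.card = 0 ∨ B1.card = 1) with h1 | h1 <;>
                rcases (by omega : B2.card = 0 ∨ B2.card = 1 ∨ B2.card = 2)
                  with h2 | h2 | h2 <;>
                [skip; skip; skip; skip; skip; skip] <;>
                · have hBc : B.card = B2.card + B1.card := hcardsplit.symm
                  rw [h1, h2] at hBc hM2
                  rw [hBc] at hcount
                  first
                  | (have hi1 : 1 ≤ i := hB2pos (by omega)
                     have hr := hrec hi1
                     omega)
                  | (rcases Nat.eq_zero_or_pos i with hiz | hip
                     · have : cseq i = 2049 := by rw [hiz]; exact hcseq0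
                       omega
                     · have hr := hrec hip
                       omega)
              done
            exact hgoal
  obtain ⟨mst, hokt, hfoldt, hosmt, hcntt⟩ := KEY t (le_refl t)
  have hefft : EffMoves α mst := OkMoves.eff hokt
  refine ⟨play α mst, ⟨?_, ?_⟩, play_head? α mst, ?_, ?_, ?_, ?_⟩
  · intro c hc
    have hprop := OkMoves.proper hokt (fun u _ x _ hadj => hα hadj) c hc
    intro u x hadj
    have := hprop u (by rw [hSt]; trivial) x (by rw [hSt]; trivial) hadj
    exact this
  · exact OkMoves.chain' hokt
  · rw [play_getLast?, hfoldt]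
    have hall : ∀ x : V, x ∈ S t := fun x => by rw [hSt]; trivial
    have : (S t).piecewise β α = β := by
      funext x
      exact Set.piecewise_eq_of_mem _ _ _ (hall x)
    rw [this]
  · have hd := destutter_play (Tset H) α mst hefft
    rw [hosmt, hplay'] at hd
    exact hd
  · intro j
    have h1 := recolCount_play α mst hefft (v j)
    rw [h1]
    exact hcntt j j.2
  · intro x hx
    obtain ⟨j, hj⟩ := hsurj x hx
    have h1 := recolCount_play α mst hefft x
    rw [h1, ← hj]
    refine (hcntt j j.2).trans ?_
    have h2 : cseq (j : ℕ) ≤ cseq 11 := cseq_mono (by omega)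
    rw [cseq_11] at h2
    exact h2
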